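/- For real γ and Y > 2, S(Y,1,γ) = -∑_{1 ≤ n ≤ Y/2} e(2γn) - e(γ) S(Y/2, 1, 2γ) + O(1), where S(Y,h,γ) = ∑_{1 ≤ n ≤ Y} ε(n) ε(n+h) e(γn) and the implied constant is absolute. -/

import Mathlib

open Complex Finset

/-- `e(x) = exp(2πix)`. -/
noncomputable def e (x : ℝ) : ℂ := Complex.exp (2 * Real.pi * Complex.I * x)

/-- `ε(n) = (-1)^(s₂ n)` where `s₂` is the binary digit sum. -/
def eps (n : ℕ) : ℤ := (-1) ^ ((Nat.digits 2 n).sum)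

/-- `S(Y,h,β) = ∑_{1 ≤ n ≤ Y} ε(n) ε(n+h) e(βn)`. -/
noncomputable def S (Y : ℝ) (h : ℕ) (β : ℝ) : ℂ :=
  ∑ n ∈ Finset.Icc 1 ⌊Y⌋₊, (eps n : ℂ) * (eps (n + h) : ℂ) * e (β * n)

/-! Split the sum by the parity of n. Since ε(2m) = ε(m) and ε(2m+1) = -ε(m), the term
n = 2m is -e(2γm), and the term n = 2m+1 is -e(γ) ε(m)ε(m+1) e(2γm), a term of S(Y/2,1,2γ).
Only the term m = 0 and possibly the endpoint m = ⌊Y/2⌋ are left over, each of modulus 1. -/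

lemma e_add (x y : ℝ) : e (x + y) = e x * e y := by
  rw [e, e, e, ← Complex.exp_add]
  congr 1
  push_cast
  ring

lemma norm_e (x : ℝ) : ‖e x‖ = 1 := by
  rw [e, show 2 * Real.pi * I * x = ((2 * Real.pi * x : ℝ) : ℂ) * I by push_cast; ring]
  exact Complex.norm_exp_ofReal_mul_I _

lemma eps_zero : eps 0 = 1 := by
  simp [eps]

lemma eps_two_mul (m : ℕ) : eps (2 * m) = eps m := by
  rcases Nat.eq_zero_or_pos m with rfl | hm
  · rfl
  · rw [eps, Nat.digits_def' one_lt_two (by omega), Nat.mul_mod_right,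
      Nat.mul_div_cancel_left _ two_pos, List.sum_cons, zero_add, eps]

lemma eps_two_mul_add_one (m : ℕ) : eps (2 * m + 1) = -eps m := by
  rw [eps, Nat.digits_def' one_lt_two (by omega), Nat.mul_add_mod, Nat.mul_add_div two_pos,
    List.sum_cons, pow_add, eps]
  norm_num

lemma eps_one : eps 1 = -1 := by
  simpa [eps_zero] using eps_two_mul_add_one 0

lemma eps_mul_self (m : ℕ) : eps m * eps m = 1 := by
  rw [eps, ← mul_pow]
  norm_num

lemma norm_eps (m : ℕ) : ‖(eps m : ℂ)‖ = 1 := by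
  simp [eps]

lemma eps_two_mul_mul_eps_two_mul_add_one (m : ℕ) : eps (2 * m) * eps (2 * m + 1) = -1 := by
  rw [eps_two_mul, eps_two_mul_add_one, mul_neg, eps_mul_self]

lemma eps_two_mul_add_one_mul_eps_two_mul_add_two (m : ℕ) :
    eps (2 * m + 1) * eps (2 * m + 2) = -(eps m * eps (m + 1)) := by
  rw [show 2 * m + 2 = 2 * (m + 1) by ring, eps_two_mul, eps_two_mul_add_one, neg_mul]

lemma sum_Icc_one_eq_sum_even_add_sum_odd {M : Type*} [AddCommMonoid M] (f : ℕ → M) (N : ℕ) :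
    ∑ n ∈ Icc 1 N, f n =
      ∑ m ∈ Icc 1 (N / 2), f (2 * m) + ∑ m ∈ range ((N + 1) / 2), f (2 * m + 1) := by
  induction N with
  | zero => simp
  | succ n ih =>
    rw [sum_Icc_succ_top (by omega), ih]
    rcases Nat.even_or_odd n with ⟨k, rfl⟩ | ⟨k, rfl⟩
    · rw [show (k + k + 1) / 2 = k by omega, show (k + k + 1 + 1) / 2 = k + 1 by omega,
        show (k + k) / 2 = k by omega, sum_range_succ, show k + k + 1 = 2 * k + 1 by ring,
        add_assoc]
    · rw [show (2 * k + 1 + 1) / 2 = k + 1 by omega, show (2 * k + 1 + 1 + 1) / 2 = k + 1 by omega,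
        show (2 * k + 1) / 2 = k by omega, sum_Icc_succ_top (by omega),
        show 2 * (k + 1) = 2 * k + 1 + 1 by ring, add_right_comm]

noncomputable def corrSum (N : ℕ) (β : ℝ) : ℂ :=
  ∑ n ∈ Icc 1 N, (eps n : ℂ) * (eps (n + 1) : ℂ) * e (β * n)

lemma S_one_eq_corrSum (Y β : ℝ) : S Y 1 β = corrSum ⌊Y⌋₊ β := rfl

lemma corrSum_eq (γ : ℝ) {N : ℕ} (hN : 1 ≤ N) :
    corrSum N γ =
      -∑ m ∈ Icc 1 (N / 2), e (2 * γ * m) + e γ - e γ * corrSum ((N - 1) / 2) (2 * γ) := by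
  have even_part : ∀ m : ℕ, (eps (2 * m) : ℂ) * eps (2 * m + 1) * e (γ * (2 * m : ℕ)) =
      -e (2 * γ * m) := fun m => by
    rw [← Int.cast_mul, eps_two_mul_mul_eps_two_mul_add_one,
      show γ * ((2 * m : ℕ) : ℝ) = 2 * γ * m by push_cast; ring]
    push_cast
    ring
  have odd_part : ∀ m : ℕ,
      (eps (2 * m + 1) : ℂ) * eps (2 * m + 1 + 1) * e (γ * (2 * m + 1 : ℕ)) =
        -e γ * ((eps m : ℂ) * eps (m + 1) * e (2 * γ * m)) := fun m => by
    rw [← Int.cast_mul, eps_two_mul_add_one_mul_eps_two_mul_add_two,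
      show γ * ((2 * m + 1 : ℕ) : ℝ) = γ + 2 * γ * m by push_cast; ring, e_add]
    push_cast
    ring
  have zero_term : (eps 0 : ℂ) * eps (0 + 1) * e (2 * γ * (0 : ℕ)) = -1 := by
    simp [eps_zero, eps_one, e]
  rw [corrSum, sum_Icc_one_eq_sum_even_add_sum_odd, sum_congr rfl fun m _ => even_part m,
    sum_congr rfl fun m _ => odd_part m, ← mul_sum, show (N + 1) / 2 = (N - 1) / 2 + 1 by omega,
    Nat.range_succ_eq_Icc_zero, ← insert_Icc_add_one_left_eq_Icc (Nat.zero_le _),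
    sum_insert (by simp), corrSum, zero_term, zero_add, sum_neg_distrib]
  ring

lemma norm_corrSum_sub_le (β : ℝ) {K M : ℕ} (hKM : K ≤ M) :
    ‖corrSum M β - corrSum K β‖ ≤ (M - K : ℕ) := by
  rw [corrSum, corrSum, ← Nat.zero_add 1, Icc_add_one_left_eq_Ioc, Icc_add_one_left_eq_Ioc,
    ← sum_Ioc_consecutive _ (Nat.zero_le K) hKM, add_sub_cancel_left, ← Nat.card_Ioc]
  refine (norm_sum_le _ _).trans_eq ?_
  simp only [norm_mul, norm_eps, norm_e, mul_one, sum_const, Nat.smul_one_eq_cast]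

theorem S_one_recurrence : ∃ C : ℝ, ∀ (γ Y : ℝ), 2 < Y →
    ‖S Y 1 γ -
      (-(∑ n ∈ Finset.Icc 1 ⌊Y / 2⌋₊, e (2 * γ * n)) - e γ * S (Y / 2) 1 (2 * γ))‖ ≤ C := by
  refine ⟨2, fun γ Y hY => ?_⟩
  have hN : 1 ≤ ⌊Y⌋₊ := (Nat.one_le_floor_iff Y).mpr (by linarith)
  rw [S_one_eq_corrSum, S_one_eq_corrSum, Nat.floor_div_ofNat, corrSum_eq γ hN]
  set N := ⌊Y⌋₊
  have endpoint : ‖corrSum (N / 2) (2 * γ) - corrSum ((N - 1) / 2) (2 * γ)‖ ≤ 1 :=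
    (norm_corrSum_sub_le _ (by omega)).trans
      (by exact_mod_cast (by omega : N / 2 - (N - 1) / 2 ≤ 1))
  calc _ = ‖e γ + e γ * (corrSum (N / 2) (2 * γ) - corrSum ((N - 1) / 2) (2 * γ))‖ := by
        congr 1; ring
    _ ≤ ‖e γ‖ + ‖e γ‖ * 1 := by
        grw [norm_add_le, norm_mul, endpoint]
    _ = 2 := by norm_num [norm_e]
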